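/- Assume each t_a is continuously differentiable, nondecreasing and convex on [0,∞). Then a link flow pair (f^{H*}, f^{A*}) ∈ K, with f* = f^{H*} + f^{A*}, satisfies the decentralized equilibrium variational inequality c^H(f*) · (f^H − f^{H*}) + c^A(f*) · (f^A − f^{A*}) ≥ 0 for all (f^H, f^A) ∈ K if and only if it satisfies the centralized equilibrium conditions: (i) c^H(f*) · (f^H − f^{H*}) ≥ 0 for all f^H ∈ K^H, and (ii) f^{A*} is a minimizer of S(f^{H*} + f^A) over f^A ∈ K^A. -/

import Mathlib

open scoped BigOperators

/-- Aggregated link flow `f = Δ x`. -/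
noncomputable def aggFlow {L P : Type*} [Fintype P] (Δ : L → P → ℝ) (x : P → ℝ) : L → ℝ :=
  fun a => ∑ p, Δ a p * x p

/-- Social cost `S(f) = Σ_a f_a t_a(f_a)`. -/
noncomputable def Scost {L : Type*} [Fintype L] (t : L → ℝ → ℝ) (f : L → ℝ) : ℝ :=
  ∑ a, f a * t a (f a)

/-- The set `K^H` of human link flows with demand `1 − α`. -/
def KH {L P : Type*} [Fintype P] (Δ : L → P → ℝ) (α : ℝ) : Set (L → ℝ) :=
  {f | ∃ x : P → ℝ, (∀ p, 0 ≤ x p) ∧ (∑ p, x p = 1 - α) ∧ f = aggFlow Δ x}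

/-- The set `K^A` of autonomous link flows with demand `α`. -/
def KA {L P : Type*} [Fintype P] (Δ : L → P → ℝ) (α : ℝ) : Set (L → ℝ) :=
  {f | ∃ x : P → ℝ, (∀ p, 0 ≤ x p) ∧ (∑ p, x p = α) ∧ f = aggFlow Δ x}

/-! The social cost is separable, `S f = ∑ a, g a (f a)` with `g a x = x * t a x`, and
`g a x = x * (t a x - t a 0) + t a 0 * x` is convex on `[0, ∞)`: the first summand is a product
of two nonnegative convex functions that increase together. Its derivative
`t a x + x * deriv (t a) x` is the autonomous link cost `c^A`, so `f^{A*}` minimizes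
`S (f^{H*} + ·)` over the convex set `K^A` exactly when the first-order condition
`c^A(f*) · (f^A - f^{A*}) ≥ 0` holds on `K^A`. Since `K` is a product, the decentralized
variational inequality splits into this condition and the human one. -/

open Set

theorem ConvexOn.add_mul_sub_le_of_hasDerivAt {S : Set ℝ} {f : ℝ → ℝ} {f' x y : ℝ}
    (hf : ConvexOn ℝ S f) (hx : x ∈ S) (hy : y ∈ S) (hf' : HasDerivAt f f' x) :
    f x + f' * (y - x) ≤ f y := by
  rcases lt_trichotomy x y with hxy | rfl | hxy
  · have := hf.le_slope_of_hasDerivAt hx hy hxy hf'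
    rw [slope_def_field, le_div_iff₀ (sub_pos.2 hxy)] at this
    linarith
  · simp
  · have := hf.slope_le_of_hasDerivAt hy hx hxy hf'
    rw [slope_def_field, div_le_iff₀ (sub_pos.2 hxy)] at this
    linarith

theorem ConvexOn.id_mul_of_monotoneOn {t : ℝ → ℝ} (hconv : ConvexOn ℝ (Ici 0) t)
    (hmono : MonotoneOn t (Ici 0)) : ConvexOn ℝ (Ici 0) (fun x => x * t x) := by
  have hshift : ConvexOn ℝ (Ici 0) (fun x => x * (t x - t 0)) :=
    (convexOn_id (convex_Ici 0)).mul (hconv.sub (concaveOn_const _ (convex_Ici 0)))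
      (fun x hx => hx) (fun x hx => sub_nonneg.2 (hmono self_mem_Ici hx hx))
      (monotoneOn_id.monovaryOn (fun x hx y hy hxy => sub_le_sub_right (hmono hx hy hxy) _))
  refine (hshift.add (LinearMap.convexOn (t 0 • LinearMap.id) (convex_Ici 0))).congr ?_
  intro x _
  simp only [Pi.add_apply, LinearMap.smul_apply, LinearMap.id_apply, smul_eq_mul]
  ring

theorem IsMinOn.hasFDerivWithinAt_sub_nonneg {E : Type*} [NormedAddCommGroup E]
    [NormedSpace ℝ E] {f : E → ℝ} {f' : StrongDual ℝ E} {s : Set E} {a y : E}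
    (h : IsMinOn f s a) (hs : Convex ℝ s) (ha : a ∈ s) (hy : y ∈ s)
    (hf : HasFDerivWithinAt f f' s a) : 0 ≤ f' (y - a) :=
  h.localize.hasFDerivWithinAt_nonneg hf
    (sub_mem_posTangentConeAt_of_segment_subset (hs.segment_subset ha hy))

theorem hasFDerivAt_sum_apply {ι : Type*} [Fintype ι] {g : ι → ℝ → ℝ} {g' : ι → ℝ}
    {x : ι → ℝ} (hg : ∀ i, HasDerivAt (g i) (g' i) (x i)) :
    HasFDerivAt (fun y : ι → ℝ => ∑ i, g i (y i))
      (∑ i, g' i • ContinuousLinearMap.proj (R := ℝ) (φ := fun _ : ι => ℝ) i) x :=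
  HasFDerivAt.fun_sum fun i _ => (hg i).comp_hasFDerivAt x (hasFDerivAt_apply i x)

theorem isMinOn_sum_apply_iff {ι : Type*} [Fintype ι] {S : Set ℝ} {C : Set (ι → ℝ)}
    {g : ι → ℝ → ℝ} {g' : ι → ℝ} {x : ι → ℝ} (hC : Convex ℝ C) (hCS : ∀ y ∈ C, ∀ i, y i ∈ S)
    (hx : x ∈ C) (hg : ∀ i, ConvexOn ℝ S (g i)) (hg' : ∀ i, HasDerivAt (g i) (g' i) (x i)) :
    IsMinOn (fun y => ∑ i, g i (y i)) C x ↔ ∀ y ∈ C, 0 ≤ ∑ i, g' i * (y i - x i) := by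
  refine ⟨fun hmin y hy => ?_, fun hfirst => isMinOn_iff.2 fun y hy => ?_⟩
  · simpa [mul_comm] using
      hmin.hasFDerivWithinAt_sub_nonneg hC hx hy (hasFDerivAt_sum_apply hg').hasFDerivWithinAt
  · have hgrad := Finset.sum_le_sum fun i (_ : i ∈ Finset.univ) =>
      (hg i).add_mul_sub_le_of_hasDerivAt (hCS x hx i) (hCS y hy i) (hg' i)
    rw [Finset.sum_add_distrib] at hgrad
    linarith [hfirst y hy]

section Flows

variable {L P : Type*} [Fintype P] {Δ : L → P → ℝ} {α : ℝ}

theorem KH_eq_KA : KH Δ α = KA Δ (1 - α) := rfl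

theorem aggFlow_nonneg (hΔ : ∀ a p, 0 ≤ Δ a p) {x : P → ℝ} (hx : ∀ p, 0 ≤ x p) (a : L) :
    0 ≤ aggFlow Δ x a :=
  Finset.sum_nonneg fun p _ => mul_nonneg (hΔ a p) (hx p)

theorem nonneg_of_mem_KA (hΔ : ∀ a p, 0 ≤ Δ a p) {f : L → ℝ} (hf : f ∈ KA Δ α) (a : L) :
    0 ≤ f a := by
  obtain ⟨x, hx, -, rfl⟩ := hf
  exact aggFlow_nonneg hΔ hx a

theorem KA_eq_image : KA Δ α =
    Matrix.mulVecLin (Matrix.of Δ) '' ({x | ∀ p, 0 ≤ x p} ∩ {x | ∑ p, x p = α}) := by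
  ext f
  simp only [KA, mem_image, mem_ofPred_eq, mem_inter_iff, and_assoc, eq_comm (a := f)]
  rfl

theorem convex_KA : Convex ℝ (KA Δ α) := by
  rw [KA_eq_image]
  have hsum : IsLinearMap ℝ fun x : P → ℝ => ∑ p, x p :=
    ⟨fun _ _ => Finset.sum_add_distrib, fun _ _ => (Finset.mul_sum ..).symm⟩
  exact ((convex_Ici 0).inter (convex_hyperplane hsum α)).linear_image _

end Flows

theorem centralized_iff_decentralized_general {L P : Type*} [Fintype L] [Fintype P]
    (Δ : L → P → ℝ) (hΔ : ∀ a p, Δ a p = 0 ∨ Δ a p = 1)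
    (t : L → ℝ → ℝ) (ht : ∀ a, ContDiff ℝ 1 (t a))
    (htmono : ∀ a, MonotoneOn (t a) (Set.Ici (0:ℝ)))
    (htconv : ∀ a, ConvexOn ℝ (Set.Ici (0:ℝ)) (t a))
    (α : ℝ)
    (fHs fAs : L → ℝ) (hfH : fHs ∈ KH Δ α) (hfA : fAs ∈ KA Δ α) :
    (∀ fH ∈ KH Δ α, ∀ fA ∈ KA Δ α,
        0 ≤ (∑ a, t a (fHs a + fAs a) * (fH a - fHs a)) +
            ∑ a, (t a (fHs a + fAs a) +
              (fHs a + fAs a) * deriv (t a) (fHs a + fAs a)) * (fA a - fAs a)) ↔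
    ((∀ fH ∈ KH Δ α, 0 ≤ ∑ a, t a (fHs a + fAs a) * (fH a - fHs a)) ∧
      (∀ fA ∈ KA Δ α,
        Scost t (fun a => fHs a + fAs a) ≤ Scost t (fun a => fHs a + fA a))) := by
  have hΔ₀ : ∀ a p, 0 ≤ Δ a p := fun a p => by rcases hΔ a p with h | h <;> simp [h]
  have hHs : ∀ a, 0 ≤ fHs a := nonneg_of_mem_KA hΔ₀ (KH_eq_KA (Δ := Δ) ▸ hfH)
  have hmarginal : ∀ a, HasDerivAt (fun x => x * t a x)
      (t a (fHs a + fAs a) + (fHs a + fAs a) * deriv (t a) (fHs a + fAs a)) (fHs a + fAs a) :=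
    fun a => by
      simpa using (hasDerivAt_id' _).fun_mul ((ht a).differentiable one_ne_zero _).hasDerivAt
  -- `Scost t` is `fun y => ∑ a, (fun x => x * t a x) (y a)`, minimized over `fHs + K^A`.
  have hsocial := isMinOn_sum_apply_iff ((convex_KA (α := α)).translate fHs)
    (S := Ici 0) (by
      rintro _ ⟨fA, hfA', rfl⟩ a
      exact add_nonneg (hHs a) (nonneg_of_mem_KA hΔ₀ hfA' a))
    (mem_image_of_mem _ hfA) (fun a => (htconv a).id_mul_of_monotoneOn (htmono a)) hmarginal
  simp only [isMinOn_iff, forall_mem_image, Pi.add_apply, add_sub_add_left_eq_sub] at hsocial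
  constructor
  · intro hVI
    exact ⟨fun fH hfH' => by simpa using hVI fH hfH' fAs hfA,
      hsocial.2 fun fA hfA' => by simpa using hVI fHs hfH fA hfA'⟩
  · rintro ⟨hhuman, hoptimal⟩ fH hfH' fA hfA'
    exact add_nonneg (hhuman fH hfH') (hsocial.1 hoptimal hfA')

/-- Theorem 6 (centralized = decentralized): with continuously differentiable,
nondecreasing, convex travel times, a link flow pair `(f^{H*}, f^{A*}) ∈ K`
satisfies the decentralized equilibrium variational inequality if and only if it
satisfies the centralized equilibrium conditions: the human Wardrop VI together
with `f^{A*}` minimizing the social cost `S(f^{H*} + ·)` over `K^A`. -/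
theorem centralized_iff_decentralized {L P : Type*} [Fintype L] [Fintype P] [Nonempty P]
    (Δ : L → P → ℝ) (hΔ : ∀ a p, Δ a p = 0 ∨ Δ a p = 1)
    (t : L → ℝ → ℝ) (ht : ∀ a, ContDiff ℝ 1 (t a))
    (htmono : ∀ a, MonotoneOn (t a) (Set.Ici (0:ℝ)))
    (htconv : ∀ a, ConvexOn ℝ (Set.Ici (0:ℝ)) (t a))
    (α : ℝ) (hα : α ∈ Set.Icc (0:ℝ) 1)
    (fHs fAs : L → ℝ) (hfH : fHs ∈ KH Δ α) (hfA : fAs ∈ KA Δ α) :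
    (∀ fH ∈ KH Δ α, ∀ fA ∈ KA Δ α,
        0 ≤ (∑ a, t a (fHs a + fAs a) * (fH a - fHs a)) +
            ∑ a, (t a (fHs a + fAs a) +
              (fHs a + fAs a) * deriv (t a) (fHs a + fAs a)) * (fA a - fAs a)) ↔
    ((∀ fH ∈ KH Δ α, 0 ≤ ∑ a, t a (fHs a + fAs a) * (fH a - fHs a)) ∧
      (∀ fA ∈ KA Δ α,
        Scost t (fun a => fHs a + fAs a) ≤ Scost t (fun a => fHs a + fA a))) :=
  centralized_iff_decentralized_general Δ hΔ t ht htmono htconv α fHs fAs hfH hfA
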